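/- arXiv:1206.4951 — 2 statements merged into one kernel-verified Lean document; each statement's English description precedes it below -/
import Mathlib

section
/- For every n ≥ 1 and k ≥ 1, the number of families α with D(α) of rank 0 is Γ_0(n,k) = 1; and for every n ≥ 1 and k ≥ 2, the number of families α with D(α) of rank 1 is Γ_1(n,k) = 3·(2^n − 1). -/
/-!
Over `F₂` a matrix has rank at most one iff all its nonzero rows are equal. The two rows of the
block of `a : Fin (k + 1) → F₂` are its restrictions `a ∘ castSucc` and `a ∘ succ`; if they lie in
`{0, v}` and `a ≠ 0`, then `a` is `e₀` (rows `(v, 0)`), the all-ones vector (rows `(v, v)`, forcing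
`a` to be shift invariant) or `e_k` (rows `(0, v)`), and for `k ≥ 2` these three have distinct
nonzero rows. Hence `D(α)` has rank one iff `α ≠ 0` and all nonzero blocks are one and the same of
these three vectors, giving `3 (2ⁿ - 1)` families.
-/

/-- The `2n × k` n-fold persymmetric matrix over `F₂` built from the family `α`:
the entry at block `j`, row `r ∈ Fin 2`, column `c ∈ Fin k` is `α j (r + c)`. -/
def persymD (n k : ℕ) (α : Fin n → Fin (k + 1) → ZMod 2) :
    Matrix (Fin n × Fin 2) (Fin k) (ZMod 2) :=
  fun p c => α p.1 ⟨p.2.val + c.val, by have h1 := p.2.isLt; have h2 := c.isLt; omega⟩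

/-- `Γ n k i` counts the families `α : Fin n → Fin (k+1) → F₂` whose associated
n-fold persymmetric matrix has rank `i`. -/
noncomputable def Gamma (n k i : ℕ) : ℕ :=
  Nat.card {α : Fin n → Fin (k + 1) → ZMod 2 // (persymD n k α).rank = i}

open Matrix Module Finset

namespace Fin
variable {M : Type*} {k : ℕ} {a : Fin (k + 1) → M}

theorem eq_single_zero_of_comp_succ_eq_zero [Zero M] (h : a ∘ succ = 0) :
    a = Pi.single 0 (a 0) := by
  funext m
  induction m using Fin.cases with
  | zero => simp
  | succ i => simpa [succ_ne_zero] using congrFun h i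

theorem eq_single_last_of_comp_castSucc_eq_zero [Zero M] (h : a ∘ castSucc = 0) :
    a = Pi.single (last k) (a (last k)) := by
  funext m
  induction m using Fin.lastCases with
  | last => simp
  | cast i => simpa [castSucc_ne_last] using congrFun h i

theorem eq_const_of_comp_castSucc_eq_comp_succ (h : a ∘ castSucc = a ∘ succ) :
    a = Function.const _ (a 0) := by
  funext m
  induction m using Fin.induction with
  | zero => rfl
  | succ i ih => exact (congrFun h i).symm.trans ih

theorem eq_zero_of_comp_castSucc_eq_zero_of_comp_succ_eq_zero [Zero M] (hk : k ≠ 0)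
    (h₀ : a ∘ castSucc = 0) (h₁ : a ∘ succ = 0) : a = 0 := by
  rw [eq_single_zero_of_comp_succ_eq_zero h₁]
  obtain ⟨k, rfl⟩ := Nat.exists_eq_succ_of_ne_zero hk
  simpa using congrFun h₀ 0

end Fin

theorem zmod_two_eq_one_of_ne_zero {x : ZMod 2} : x ≠ 0 → x = 1 := by
  revert x; decide

namespace Matrix
variable {m n K : Type*} [Fintype m] [Fintype n]

theorem rank_eq_zero_iff [Field K] {A : Matrix m n K} : A.rank = 0 ↔ A = 0 := by
  rw [A.rank_eq_finrank_span_row, Submodule.finrank_eq_zero, Submodule.span_eq_bot,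
    Set.forall_mem_range]
  exact funext_iff.symm

theorem rank_le_one_iff_exists_forall_row_eq_zero_or_eq {A : Matrix m n (ZMod 2)} :
    A.rank ≤ 1 ↔ ∃ v, ∀ i, A i = 0 ∨ A i = v := by
  rw [A.rank_eq_finrank_span_row]
  constructor
  · intro h
    obtain ⟨v, hv⟩ := (Submodule.finrank_le_one_iff_isPrincipal _).mp h
    refine ⟨v, fun i => ?_⟩
    obtain ⟨c, hc⟩ := Submodule.mem_span_singleton.mp (hv ▸ Submodule.subset_span ⟨i, rfl⟩ :
      A i ∈ Submodule.span (ZMod 2) {v})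
    rcases (by decide : ∀ c : ZMod 2, c = 0 ∨ c = 1) c with rfl | rfl
    exacts [.inl (by rw [← hc, zero_smul]), .inr (by rw [← hc, one_smul])]
  · rintro ⟨v, hv⟩
    calc finrank (ZMod 2) (Submodule.span (ZMod 2) (Set.range A.row))
        ≤ finrank (ZMod 2) (Submodule.span (ZMod 2) {v}) := by
          refine Submodule.finrank_mono (Submodule.span_le.mpr ?_)
          rintro _ ⟨i, rfl⟩
          rcases hv i with h | h <;> simp [row, h, Submodule.mem_span_singleton_self]
      _ ≤ 1 := by simpa using finrank_span_le_card ({v} : Set (n → ZMod 2))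

end Matrix

theorem card_ne_zero_and_exists_forall_eq_zero_or_eq {ι M : Type*} [Fintype ι] [Fintype M] [Zero M]
    (S : Finset M) (hS : 0 ∉ S) :
    Nat.card {f : ι → M // f ≠ 0 ∧ ∃ w ∈ S, ∀ i, f i = 0 ∨ f i = w} =
      #S * (2 ^ Fintype.card ι - 1) := by
  classical
  have hfilter : ({f : ι → M | f ≠ 0 ∧ ∃ w ∈ S, ∀ i, f i = 0 ∨ f i = w} : Finset _) =
      S.biUnion fun w => (Fintype.piFinset fun _ => {0, w}).erase 0 := by
    ext f
    simp only [mem_filter, mem_univ, true_and, mem_biUnion, mem_erase, Fintype.mem_piFinset,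
      mem_insert, mem_singleton]
    exact ⟨fun ⟨hf, w, hw, h⟩ => ⟨w, hw, hf, h⟩, fun ⟨w, hw, hf, h⟩ => ⟨hf, w, hw, h⟩⟩
  rw [Nat.card_eq_fintype_card, Fintype.card_subtype, hfilter, card_biUnion, sum_const_nat]
  · intro w hw
    rw [card_erase_of_mem (by simp), Fintype.card_piFinset, prod_const,
      card_pair (ne_of_mem_of_not_mem hw hS).symm, card_univ]
  · intro w _ w' _ hne
    refine disjoint_left.mpr fun f hf hf' => ?_
    simp only [mem_erase, Fintype.mem_piFinset, mem_insert, mem_singleton] at hf hf'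
    refine hf.1 (funext fun i => ?_)
    rcases hf.2 i with h | h
    · exact h
    · exact (hf'.2 i).resolve_right (h ▸ hne)

section Blocks
variable {k : ℕ}

/-- For `k ≥ 1`, the `a` whose `2 × k` Hankel block has rank one, i.e. is nonzero with equal
nonzero rows. -/
def rankOneBlocks (k : ℕ) : Finset (Fin (k + 1) → ZMod 2) :=
  {Pi.single 0 1, 1, Pi.single (Fin.last k) 1}

theorem card_rankOneBlocks (hk : k ≠ 0) : #(rankOneBlocks k) = 3 := by
  refine card_eq_three.mpr ⟨_, _, _, fun h => ?_, fun h => ?_, fun h => ?_, rfl⟩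
  · simpa [Pi.single_apply, Fin.ext_iff, hk] using congrFun h (Fin.last k)
  · simpa [Pi.single_apply, Fin.ext_iff, hk] using congrFun h 0
  · simpa [Pi.single_apply, Fin.ext_iff, hk] using congrFun h 0

theorem zero_notMem_rankOneBlocks : 0 ∉ rankOneBlocks k := by
  simp [rankOneBlocks, eq_comm (a := (0 : Fin (k + 1) → ZMod 2))]

theorem hankel_rows_cases {a : Fin (k + 1) → ZMod 2} {v : Fin k → ZMod 2} (hk : k ≠ 0)
    (h₀ : a ∘ Fin.castSucc = 0 ∨ a ∘ Fin.castSucc = v) (h₁ : a ∘ Fin.succ = 0 ∨ a ∘ Fin.succ = v)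
    (ha : a ≠ 0) :
    (a = Pi.single 0 1 ∧ v = a ∘ Fin.castSucc) ∨ (a = 1 ∧ v = 1) ∨
      (a = Pi.single (Fin.last k) 1 ∧ v = a ∘ Fin.succ) := by
  rcases h₀ with h₀ | rfl <;> rcases h₁ with h₁ | h₁
  · exact (ha (Fin.eq_zero_of_comp_castSucc_eq_zero_of_comp_succ_eq_zero hk h₀ h₁)).elim
  · refine .inr (.inr ⟨?_, h₁.symm⟩)
    rw [Fin.eq_single_last_of_comp_castSucc_eq_zero h₀] at ha ⊢
    exact congrArg _ (zmod_two_eq_one_of_ne_zero (by simpa using ha))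
  · refine .inl ⟨?_, rfl⟩
    rw [Fin.eq_single_zero_of_comp_succ_eq_zero h₁] at ha ⊢
    exact congrArg _ (zmod_two_eq_one_of_ne_zero (by simpa using ha))
  · have hconst : a = 1 := by
      rw [Fin.eq_const_of_comp_castSucc_eq_comp_succ h₁.symm] at ha ⊢
      exact congrArg _ (zmod_two_eq_one_of_ne_zero fun h => ha (by simp [h]))
    exact .inr (.inl ⟨hconst, by rw [hconst]; rfl⟩)

theorem rankOneBlocks_rows_ne (hk : 2 ≤ k) :
    (Pi.single 0 1 : Fin (k + 1) → ZMod 2) ∘ Fin.castSucc ≠ 1 ∧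
    (Pi.single 0 1 : Fin (k + 1) → ZMod 2) ∘ Fin.castSucc ≠
      (Pi.single (Fin.last k) 1 : Fin (k + 1) → ZMod 2) ∘ Fin.succ ∧
    (1 : Fin k → ZMod 2) ≠ (Pi.single (Fin.last k) 1 : Fin (k + 1) → ZMod 2) ∘ Fin.succ := by
  refine ⟨fun h => ?_, fun h => ?_, fun h => ?_⟩
  · simpa [Pi.single_apply, Fin.ext_iff] using congrFun h ⟨1, hk⟩
  all_goals
    have := congrFun h ⟨0, by omega⟩
    simp [Pi.single_apply, Fin.ext_iff] at this
    omega

theorem eq_of_hankel_rows_eq_zero_or_eq {a b : Fin (k + 1) → ZMod 2} {v : Fin k → ZMod 2}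
    (hk : 2 ≤ k) (ha₀ : a ∘ Fin.castSucc = 0 ∨ a ∘ Fin.castSucc = v)
    (ha₁ : a ∘ Fin.succ = 0 ∨ a ∘ Fin.succ = v) (hb₀ : b ∘ Fin.castSucc = 0 ∨ b ∘ Fin.castSucc = v)
    (hb₁ : b ∘ Fin.succ = 0 ∨ b ∘ Fin.succ = v) (ha : a ≠ 0) (hb : b ≠ 0) : a = b := by
  have := rankOneBlocks_rows_ne hk
  rcases hankel_rows_cases (by omega) ha₀ ha₁ ha with ⟨rfl, rfl⟩ | ⟨rfl, rfl⟩ | ⟨rfl, rfl⟩ <;>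
    rcases hankel_rows_cases (by omega) hb₀ hb₁ hb with ⟨rfl, h⟩ | ⟨rfl, h⟩ | ⟨rfl, h⟩ <;>
    simp_all [eq_comm]

end Blocks

section PersymD
variable {n k : ℕ} (α : Fin n → Fin (k + 1) → ZMod 2)

theorem persymD_apply_zero (j : Fin n) : persymD n k α (j, 0) = α j ∘ Fin.castSucc := by
  funext c; exact congrArg (α j) (Fin.ext (by simp))

theorem persymD_apply_one (j : Fin n) : persymD n k α (j, 1) = α j ∘ Fin.succ := by
  funext c; exact congrArg (α j) (Fin.ext (by simp [add_comm]))

theorem persymD_eq_zero_iff (hk : k ≠ 0) : persymD n k α = 0 ↔ α = 0 := by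
  refine ⟨fun h => funext fun j => ?_, fun h => h ▸ rfl⟩
  refine Fin.eq_zero_of_comp_castSucc_eq_zero_of_comp_succ_eq_zero hk ?_ ?_
  · rw [← persymD_apply_zero, h]; rfl
  · rw [← persymD_apply_one, h]; rfl

theorem rank_persymD_le_one_iff (hk : 2 ≤ k) :
    (persymD n k α).rank ≤ 1 ↔ ∃ w ∈ rankOneBlocks k, ∀ j, α j = 0 ∨ α j = w := by
  simp only [rank_le_one_iff_exists_forall_row_eq_zero_or_eq, Prod.forall, Fin.forall_fin_two,
    persymD_apply_zero, persymD_apply_one]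
  constructor
  · rintro ⟨v, hv⟩
    by_cases hα : ∃ j₀, α j₀ ≠ 0
    · obtain ⟨j₀, hj₀⟩ := hα
      refine ⟨α j₀, ?_, fun j => or_iff_not_imp_left.mpr fun hj =>
        eq_of_hankel_rows_eq_zero_or_eq hk (hv j).1 (hv j).2 (hv j₀).1 (hv j₀).2 hj hj₀⟩
      rcases hankel_rows_cases (by omega) (hv j₀).1 (hv j₀).2 hj₀ with
        ⟨h, -⟩ | ⟨h, -⟩ | ⟨h, -⟩ <;> simp [rankOneBlocks, h]
    · simp only [not_exists, not_not] at hα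
      exact ⟨1, by simp [rankOneBlocks], fun j => .inl (hα j)⟩
  · rintro ⟨w, hw, hα⟩
    obtain ⟨v, hv₀, hv₁⟩ : ∃ v : Fin k → ZMod 2, (w ∘ Fin.castSucc = 0 ∨ w ∘ Fin.castSucc = v) ∧
        (w ∘ Fin.succ = 0 ∨ w ∘ Fin.succ = v) := by
      simp only [rankOneBlocks, mem_insert, mem_singleton] at hw
      rcases hw with rfl | rfl | rfl
      · exact ⟨_, .inr rfl, .inl (funext fun c => by simp [Fin.succ_ne_zero])⟩
      · exact ⟨1, .inr rfl, .inr rfl⟩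
      · exact ⟨_, .inl (funext fun c => by simp [Fin.castSucc_ne_last]), .inr rfl⟩
    refine ⟨v, fun j => ?_⟩
    rcases hα j with h | h <;> rw [h]
    exacts [⟨.inl rfl, .inl rfl⟩, ⟨hv₀, hv₁⟩]

end PersymD

theorem rank_persymD_eq_one_iff {n k : ℕ} (α : Fin n → Fin (k + 1) → ZMod 2) (hk : 2 ≤ k) :
    (persymD n k α).rank = 1 ↔ α ≠ 0 ∧ ∃ w ∈ rankOneBlocks k, ∀ j, α j = 0 ∨ α j = w := by
  rw [← rank_persymD_le_one_iff α hk, ne_eq, ← persymD_eq_zero_iff α (by omega),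
    ← Matrix.rank_eq_zero_iff]
  omega

theorem gamma_rank_zero_one_general (n k : ℕ) :
    (1 ≤ k → Gamma n k 0 = 1) ∧
    (2 ≤ k → (Gamma n k 1 : ℤ) = 3 * (2 ^ n - 1)) := by
  refine ⟨fun hk => ?_, fun hk => ?_⟩
  · simp_rw [Gamma, Matrix.rank_eq_zero_iff, persymD_eq_zero_iff _ (Nat.one_le_iff_ne_zero.mp hk)]
    exact Nat.card_unique
  · have hcard : Gamma n k 1 = 3 * (2 ^ n - 1) := by
      rw [Gamma, Nat.card_congr (Equiv.subtypeEquivRight fun α => rank_persymD_eq_one_iff α hk),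
        card_ne_zero_and_exists_forall_eq_zero_or_eq _ zero_notMem_rankOneBlocks,
        card_rankOneBlocks (by omega), Fintype.card_fin]
    rw [hcard, Nat.cast_mul, Nat.cast_sub Nat.one_le_two_pow]
    push_cast
    rfl

theorem gamma_rank_zero_one (n k : ℕ) (hn : 1 ≤ n) :
    (1 ≤ k → Gamma n k 0 = 1) ∧
    (2 ≤ k → (Gamma n k 1 : ℤ) = 3 * (2 ^ n - 1)) :=
  gamma_rank_zero_one_general n k
end

section
/- For every n ≥ 1 and k ≥ 1, the following identity holds in the rational numbers: Σ_{i=0}^{min(2n,k)} Γ_i(n,k)·2^{−i} = 2^{n + k(n−1)} + 2^{(k−1)n} − 2^{(k−1)n}·2^{−k}. -/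
/-!
Since `|ker D(α)| = 2^(k - rank D(α))`, the weighted sum is `2^(-k) ∑_α |ker D(α)|`, and counting
the pairs `(α, x)` with `D(α) x = 0` the other way round gives `2^(-k) ∑_x #{α | D(α) x = 0}`.
The condition `D(α) x = 0` splits into one condition `H(α j) x = 0` per block, where
`β ↦ H(β) x` is a linear map `F₂^(k+1) → F₂²`. For `x ≠ 0` this map is onto: if `c₀` and `c₁`
are the first and last indices with `x c ≠ 0`, the unit vectors at `c₀` and `c₁ + 1` are sent to
multiples of the two unit vectors of `F₂²`. Hence `2^((k+1)n)` families annihilate `x = 0` and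
`2^((k-1)n)` annihilate each of the `2^k - 1` other vectors.
-/

open Finset Module
open scoped Matrix

theorem LinearMap.natCard_ker_mul_pow_finrank_range {K V W : Type*} [Field K] [AddCommGroup V]
    [Module K V] [FiniteDimensional K V] [AddCommGroup W] [Module K W] (f : V →ₗ[K] W) :
    Nat.card (ker f) * Nat.card K ^ finrank K (range f) = Nat.card K ^ finrank K V := by
  rw [natCard_eq_pow_finrank (K := K), ← pow_add, add_comm, finrank_range_add_finrank_ker]

theorem Matrix.card_ker_mulVec_mul_pow_rank {K m n : Type*} [Field K] [Fintype K] [DecidableEq K]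
    [Fintype m] [Fintype n] [DecidableEq n] (A : Matrix m n K) :
    #{x | A *ᵥ x = 0} * Fintype.card K ^ A.rank = Fintype.card K ^ Fintype.card n := by
  have hker : #{x | A *ᵥ x = 0} = Nat.card (LinearMap.ker A.mulVecLin) := by
    rw [← Fintype.card_subtype, ← Nat.card_eq_fintype_card]
    rfl
  rw [hker, ← Nat.card_eq_fintype_card, Matrix.rank, LinearMap.natCard_ker_mul_pow_finrank_range,
    finrank_fintype_fun_eq_card]

section Hankel

variable {K : Type*} [Field K] {k : ℕ}

def hankelMulVec (x : Fin k → K) : (Fin (k + 1) → K) →ₗ[K] Fin 2 → K where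
  toFun β r := ∑ c : Fin k, β ⟨r.val + c.val, by omega⟩ * x c
  map_add' β γ := by ext; simp [add_mul, sum_add_distrib]
  map_smul' a β := by ext; simp [mul_sum, mul_assoc]

theorem hankelMulVec_apply_zero (x : Fin k → K) (β : Fin (k + 1) → K) :
    hankelMulVec x β 0 = ∑ c, β c.castSucc * x c := by
  simp [hankelMulVec, Fin.castSucc, Fin.castAdd, Fin.castLE]

theorem hankelMulVec_apply_one (x : Fin k → K) (β : Fin (k + 1) → K) :
    hankelMulVec x β 1 = ∑ c, β c.succ * x c := by
  simp [hankelMulVec, Fin.succ, add_comm]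

theorem hankelMulVec_single_castSucc {x : Fin k → K} {i : Fin k} (hx : ∀ c < i, x c = 0) :
    hankelMulVec x (Pi.single i.castSucc 1) = Pi.single 0 (x i) := by
  ext r
  fin_cases r
  · simp [hankelMulVec_apply_zero, Pi.single_apply]
  · simp only [hankelMulVec_apply_one, Fin.mk_one, Pi.single_apply]
    refine sum_eq_zero fun c _ => ?_
    split_ifs with h
    · rw [hx c (Fin.castSucc_lt_castSucc_iff.mp (h ▸ Fin.castSucc_lt_succ))]; simp
    · simp

theorem hankelMulVec_single_succ {x : Fin k → K} {i : Fin k} (hx : ∀ c > i, x c = 0) :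
    hankelMulVec x (Pi.single i.succ 1) = Pi.single 1 (x i) := by
  ext r
  fin_cases r
  · simp only [hankelMulVec_apply_zero, Fin.zero_eta, Pi.single_apply]
    refine sum_eq_zero fun c _ => ?_
    split_ifs with h
    · rw [hx c (Fin.succ_lt_succ_iff.mp (h ▸ Fin.castSucc_lt_succ))]; simp
    · simp
  · simp [hankelMulVec_apply_one, Pi.single_apply]

theorem hankelMulVec_surjective {x : Fin k → K} (hx : x ≠ 0) :
    Function.Surjective (hankelMulVec x) := by
  classical
  have hs : ({c | x c ≠ 0} : Finset (Fin k)).Nonempty := by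
    simpa [Finset.Nonempty, funext_iff] using hx
  set c₀ := ({c | x c ≠ 0} : Finset (Fin k)).min' hs
  set c₁ := ({c | x c ≠ 0} : Finset (Fin k)).max' hs
  have hc₀ : x c₀ ≠ 0 := by simpa using min'_mem _ hs
  have hc₁ : x c₁ ≠ 0 := by simpa using max'_mem _ hs
  have h₀ := hankelMulVec_single_castSucc (i := c₀) fun c hc => by
    by_contra h; exact (min'_le _ c (by simpa using h)).not_gt hc
  have h₁ := hankelMulVec_single_succ (i := c₁) fun c hc => by
    by_contra h; exact (le_max' _ c (by simpa using h)).not_gt hc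
  intro t
  refine ⟨(t 0 / x c₀) • Pi.single c₀.castSucc 1 + (t 1 / x c₁) • Pi.single c₁.succ 1, ?_⟩
  ext r
  fin_cases r <;> simp [h₀, h₁, hc₀, hc₁]

theorem card_ker_hankelMulVec_mul [Fintype K] [DecidableEq K] {x : Fin k → K} (hx : x ≠ 0) :
    #{β | hankelMulVec x β = 0} * Fintype.card K ^ 2 = Fintype.card K ^ (k + 1) := by
  have hker : #{β | hankelMulVec x β = 0} = Nat.card (LinearMap.ker (hankelMulVec x)) := by
    rw [← Fintype.card_subtype, ← Nat.card_eq_fintype_card]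
    rfl
  have hrange : finrank K (LinearMap.range (hankelMulVec x)) = 2 := by
    rw [LinearMap.range_eq_top.mpr (hankelMulVec_surjective hx), finrank_top, finrank_fin_fun]
  have := (hankelMulVec x).natCard_ker_mul_pow_finrank_range
  rwa [hrange, finrank_fin_fun, ← hker, Nat.card_eq_fintype_card] at this

end Hankel

theorem persymD_mulVec_eq_zero_iff {n k : ℕ} (α : Fin n → Fin (k + 1) → ZMod 2)
    (x : Fin k → ZMod 2) :
    persymD n k α *ᵥ x = 0 ↔ ∀ j, hankelMulVec x (α j) = 0 :=
  ⟨fun h j => funext fun r => congrFun h (j, r), fun h => funext fun p => congrFun (h p.1) p.2⟩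

theorem card_persymD_mulVec_eq_zero (n : ℕ) {k : ℕ} (x : Fin k → ZMod 2) :
    #{α | persymD n k α *ᵥ x = 0} = #{β | hankelMulVec x β = 0} ^ n := by
  have : ({α | persymD n k α *ᵥ x = 0} : Finset _) =
      Fintype.piFinset fun _ => {β | hankelMulVec x β = 0} := by
    ext α
    simp [persymD_mulVec_eq_zero_iff]
  rw [this, Fintype.card_piFinset_const]

theorem card_persymD_mulVec_eq_zero_of_ne_zero (n : ℕ) {k : ℕ} {x : Fin k → ZMod 2}
    (hx : x ≠ 0) :
    (#{α | persymD n k α *ᵥ x = 0} : ℚ) = 2 ^ (((k : ℤ) - 1) * n) := by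
  have hker : (#{β | hankelMulVec x β = 0} : ℚ) * 2 ^ 2 = 2 ^ (k + 1) := by
    exact_mod_cast ZMod.card 2 ▸ card_ker_hankelMulVec_mul hx
  rw [card_persymD_mulVec_eq_zero, Nat.cast_pow, zpow_mul, zpow_natCast,
    zpow_sub_one₀ two_ne_zero, zpow_natCast]
  congr 1
  linear_combination hker / 4

theorem sum_card_ker_persymD (n k : ℕ) :
    ∑ α, (#{x | persymD n k α *ᵥ x = 0} : ℚ) =
      2 ^ ((k + 1) * n) + (2 ^ k - 1) * 2 ^ (((k : ℤ) - 1) * n) := by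
  have hswap := sum_card_bipartiteAbove_eq_sum_card_bipartiteBelow (s := univ) (t := univ)
    (r := fun α x => persymD n k α *ᵥ x = 0)
  have hzero : #{α | persymD n k α *ᵥ (0 : Fin k → ZMod 2) = 0} = 2 ^ ((k + 1) * n) := by
    simp [← pow_mul, mul_comm]
  have hcompl : (#({0}ᶜ : Finset (Fin k → ZMod 2)) : ℚ) = 2 ^ k - 1 := by
    rw [card_compl, card_singleton, Fintype.card_fun, ZMod.card, Fintype.card_fin,
      Nat.cast_sub Nat.one_le_two_pow]
    norm_num
  simp only [bipartiteAbove, bipartiteBelow] at hswap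
  rw [← Nat.cast_sum, hswap, Nat.cast_sum, Fintype.sum_eq_add_sum_compl 0, hzero, Nat.cast_pow,
    Nat.cast_ofNat,
    sum_congr rfl fun x hx =>
      card_persymD_mulVec_eq_zero_of_ne_zero n (mem_compl.mp hx ∘ mem_singleton.mpr),
    sum_const, nsmul_eq_mul, hcompl]

theorem sum_Gamma_mul {R : Type*} [Semiring R] (n k : ℕ) (f : ℕ → R) :
    ∑ i ∈ range (min (2 * n) k + 1), (Gamma n k i : R) * f i =
      ∑ α, f (persymD n k α).rank := by
  have hrank : ∀ α ∈ (univ : Finset (Fin n → Fin (k + 1) → ZMod 2)),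
      (persymD n k α).rank ∈ range (min (2 * n) k + 1) := fun α _ => by
    have := (persymD n k α).rank_le_card_height
    have := (persymD n k α).rank_le_card_width
    simp_all only [Fintype.card_prod, Fintype.card_fin, mem_range]
    omega
  rw [← sum_fiberwise_of_maps_to hrank]
  refine sum_congr rfl fun i _ => ?_
  rw [sum_congr rfl fun α hα => by rw [(mem_filter.mp hα).2], sum_const, nsmul_eq_mul, Gamma,
    Nat.card_eq_fintype_card, Fintype.card_subtype]

theorem gamma_weighted_sum_one_general (n k : ℕ) :
    ∑ i ∈ Finset.range (min (2 * n) k + 1), (Gamma n k i : ℚ) * (2 : ℚ) ^ (-(i : ℤ)) =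
      (2 : ℚ) ^ ((n : ℤ) + (k : ℤ) * ((n : ℤ) - 1))
        + (2 : ℚ) ^ (((k : ℤ) - 1) * (n : ℤ))
        - (2 : ℚ) ^ (((k : ℤ) - 1) * (n : ℤ)) * (2 : ℚ) ^ (-(k : ℤ)) := by
  have hrank (α : Fin n → Fin (k + 1) → ZMod 2) : (2 : ℚ) ^ (-((persymD n k α).rank : ℤ)) =
      2 ^ (-(k : ℤ)) * #{x | persymD n k α *ᵥ x = 0} := by
    have h : (#{x | persymD n k α *ᵥ x = 0} : ℚ) * 2 ^ (persymD n k α).rank = 2 ^ k := by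
      exact_mod_cast ZMod.card 2 ▸ Fintype.card_fin k ▸
        (persymD n k α).card_ker_mulVec_mul_pow_rank
    rw [eq_div_of_mul_eq (by positivity) h, zpow_neg, zpow_neg, zpow_natCast, zpow_natCast]
    field_simp
  have h2k : (2 : ℚ) ^ (-(k : ℤ)) * 2 ^ k = 1 := by simp
  have h2kn : (2 : ℚ) ^ (-(k : ℤ)) * 2 ^ ((k + 1) * n) = 2 ^ ((n : ℤ) + k * (n - 1)) := by
    rw [← zpow_natCast, ← zpow_add₀ two_ne_zero]
    push_cast
    ring_nf
  rw [sum_Gamma_mul, sum_congr rfl fun α _ => hrank α, ← mul_sum, sum_card_ker_persymD]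
  linear_combination h2kn + 2 ^ (((k : ℤ) - 1) * n) * h2k

theorem gamma_weighted_sum_one (n k : ℕ) (hn : 1 ≤ n) (hk : 1 ≤ k) :
    ∑ i ∈ Finset.range (min (2 * n) k + 1), (Gamma n k i : ℚ) * (2 : ℚ) ^ (-(i : ℤ)) =
      (2 : ℚ) ^ ((n : ℤ) + (k : ℤ) * ((n : ℤ) - 1))
        + (2 : ℚ) ^ (((k : ℤ) - 1) * (n : ℤ))
        - (2 : ℚ) ^ (((k : ℤ) - 1) * (n : ℤ)) * (2 : ℚ) ^ (-(k : ℤ)) :=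
  gamma_weighted_sum_one_general n k
end
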